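/- arXiv:1305.4667 — 2 statements merged into one kernel-verified Lean document; each statement's English description precedes it below -/
import Mathlib

section
/- In the ring R = ℤ[w,z]/(w² - 2w, wz - 2w), every element can be written uniquely in the form λw + P(z) where λ ∈ ℤ and P is a polynomial with integer coefficients; that is, R is a free ℤ-module with basis {w, 1, z, z², z³, ...}. -/
open MvPolynomial

noncomputable def SWFIdeal : Ideal (MvPolynomial (Fin 2) ℤ) :=
  Ideal.span {(X 0 : MvPolynomial (Fin 2) ℤ) ^ 2 - 2 * X 0,
    (X 0 : MvPolynomial (Fin 2) ℤ) * X 1 - 2 * X 0}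

abbrev SWFRing : Type := MvPolynomial (Fin 2) ℤ ⧸ SWFIdeal

noncomputable def w : SWFRing := Ideal.Quotient.mk SWFIdeal (X 0)
noncomputable def z : SWFRing := Ideal.Quotient.mk SWFIdeal (X 1)

theorem Polynomial.mul_aeval_eq_of_mul_eq {R A : Type*} [CommRing R] [CommRing A] [Algebra R A]
    {a b c : A} (h : a * b = a * c) (p : Polynomial R) :
    a * Polynomial.aeval b p = a * Polynomial.aeval c p := by
  obtain ⟨d, hd⟩ := Polynomial.sub_dvd_eval_sub b c (p.map (algebraMap R A))
  rw [Polynomial.eval_map_algebraMap, Polynomial.eval_map_algebraMap] at hd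
  rw [← sub_eq_zero, ← mul_sub, hd, ← mul_assoc, mul_sub, h, sub_self, zero_mul]

namespace SWFRing

theorem w_sq : w ^ 2 = 2 * w := by
  rw [w, ← map_pow, ← map_ofNat (Ideal.Quotient.mk SWFIdeal) 2, ← map_mul, Ideal.Quotient.eq]
  exact Ideal.subset_span (by simp)

theorem w_mul_z : w * z = 2 * w := by
  rw [w, z, ← map_mul, ← map_ofNat (Ideal.Quotient.mk SWFIdeal) 2, ← map_mul, Ideal.Quotient.eq]
  exact Ideal.subset_span (by simp)

section lift

variable {S : Type*} [CommRing S] (a b : S)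

theorem SWFIdeal_le_ker_eval₂Hom (ha : a ^ 2 = 2 * a) (hab : a * b = 2 * a) :
    SWFIdeal ≤ RingHom.ker (eval₂Hom (Int.castRingHom S) ![a, b]) := by
  rw [SWFIdeal, Ideal.span_le, Set.insert_subset_iff, Set.singleton_subset_iff]
  simp [RingHom.mem_ker, ha, hab]

noncomputable def lift (ha : a ^ 2 = 2 * a) (hab : a * b = 2 * a) : SWFRing →+* S :=
  Ideal.Quotient.lift SWFIdeal (eval₂Hom (Int.castRingHom S) ![a, b]) fun _ hp =>
    RingHom.mem_ker.mp (SWFIdeal_le_ker_eval₂Hom a b ha hab hp)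

variable (ha : a ^ 2 = 2 * a) (hab : a * b = 2 * a)

@[simp] theorem lift_w : lift a b ha hab w = a := by
  rw [lift, w, Ideal.Quotient.lift_mk]; simp

@[simp] theorem lift_z : lift a b ha hab z = b := by
  rw [lift, z, Ideal.Quotient.lift_mk]; simp

@[simp] theorem lift_aeval_z (p : Polynomial ℤ) :
    lift a b ha hab (Polynomial.aeval z p) = Polynomial.aeval b p := by
  simpa using (Polynomial.aeval_algHom_apply (lift a b ha hab).toIntAlgHom z p).symm

end lift

theorem w_mul_aeval_z (p : Polynomial ℤ) : w * Polynomial.aeval z p = (p.eval 2 : ℤ) * w := by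
  have h : w * z = w * algebraMap ℤ SWFRing 2 := by rw [w_mul_z, map_ofNat, mul_comm]
  rw [Polynomial.mul_aeval_eq_of_mul_eq h, Polynomial.aeval_algebraMap_apply_eq_algebraMap_eval,
    mul_comm, eq_intCast]

noncomputable def repr (p : ℤ × Polynomial ℤ) : SWFRing := p.1 * w + Polynomial.aeval z p.2

theorem repr_add (p q : ℤ × Polynomial ℤ) : repr (p + q) = repr p + repr q := by
  simp only [repr, Prod.fst_add, Prod.snd_add, Int.cast_add, map_add]
  ring

theorem repr_mul (p q : ℤ × Polynomial ℤ) :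
    repr p * repr q =
      repr (2 * p.1 * q.1 + p.1 * q.2.eval 2 + q.1 * p.2.eval 2, p.2 * q.2) := by
  calc repr p * repr q
      = p.1 * q.1 * w ^ 2 + p.1 * (w * Polynomial.aeval z q.2)
          + q.1 * (w * Polynomial.aeval z p.2) + Polynomial.aeval z p.2 * Polynomial.aeval z q.2 := by
        simp only [repr]; ring
    _ = _ := by
        rw [w_sq, w_mul_aeval_z, w_mul_aeval_z, repr, map_mul]; push_cast; ring

theorem repr_surjective : Function.Surjective repr := by
  intro x
  obtain ⟨q, rfl⟩ := Ideal.Quotient.mk_surjective x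
  induction q using MvPolynomial.induction_on with
  | C n => exact ⟨(0, Polynomial.C n), by simp [repr]⟩
  | add p q hp hq =>
    obtain ⟨p', hp'⟩ := hp
    obtain ⟨q', hq'⟩ := hq
    exact ⟨p' + q', by rw [repr_add, hp', hq', map_add]⟩
  | mul_X p i hp =>
    obtain ⟨p', hp'⟩ := hp
    have hX : ∃ r, repr r = Ideal.Quotient.mk SWFIdeal (X i) := by
      fin_cases i
      · exact ⟨(1, 0), by simp [repr, w]⟩
      · exact ⟨(0, Polynomial.X), by simp [repr, z]⟩
    obtain ⟨r, hr⟩ := hX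
    exact ⟨_, by rw [← repr_mul p' r, hp', hr, map_mul]⟩

theorem repr_injective : Function.Injective repr := by
  rintro ⟨m, p⟩ ⟨n, q⟩ h
  have hpq : p = q := by
    have := congrArg (lift 0 (Polynomial.X : Polynomial ℤ) (by simp) (by simp)) h
    simp only [repr, map_add, map_mul, map_intCast, lift_w, mul_zero, zero_add, lift_aeval_z] at this
    -- `aeval` uses `algebraInt` here, which matches the polynomial algebra only up to unfolding
    exact (Polynomial.aeval_X_left_apply p).symm.trans (this.trans (Polynomial.aeval_X_left_apply q))
  have hmn : m = n := by
    have := congrArg (lift (2 : ℤ) 2 (by norm_num) (by norm_num)) h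
    simp [repr, hpq] at this
    omega
  rw [hpq, hmn]

end SWFRing

/-- Every element of `R = ℤ[w,z]/(w² - 2w, wz - 2w)` is uniquely of the form
`λ·w + P(z)` with `λ ∈ ℤ` and `P ∈ ℤ[z]`; i.e. `R` is free over `ℤ` with basis
`{w, 1, z, z², ...}`. -/
theorem stmt_4 (x : SWFRing) :
    ∃! p : ℤ × Polynomial ℤ, x = (p.1 : SWFRing) * w + Polynomial.aeval z p.2 := by
  have := Function.Bijective.existsUnique ⟨SWFRing.repr_injective, SWFRing.repr_surjective⟩ x
  simp only [eq_comm] at this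
  exact this
end

section
/- Let R = ℤ[w,z]/(w² - 2w, wz - 2w). Under the ring homomorphism R → ℤ[θ, θ⁻¹] determined by w ↦ 0 and z ↦ 2 - (θ + θ⁻¹), an element y ∈ R satisfies φ(y) = 0 if and only if y = c·w for some c ∈ ℤ. -/
/-!
Modulo the relations, `w * z = 2 * w` and `w * w = 2 * w`, so every element of `R` has the
form `q(z) + c * w` with `q ∈ ℤ[X]` and `c ∈ ℤ`, and `φ` sends it to `q(t)` with
`t = 2 - (θ + θ⁻¹)`. It remains to see that `t` is transcendental over `ℤ`: `θ` is a root of the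
monic polynomial `X² - (2 - t) X + 1` over `ℤ[t]`, so if `t` were algebraic then so would be `θ`,
which is not.
-/

open MvPolynomial

namespace LaurentPolynomial

theorem transcendental_two_sub_T_add_T_neg_one {R : Type*} [CommRing R] [IsDomain R] :
    Transcendental R (2 - (T 1 + T (-1)) : R[T;T⁻¹]) := by
  set t : R[T;T⁻¹] := 2 - (T 1 + T (-1))
  intro ht
  let S := Algebra.adjoin R {t}
  have : Algebra.IsAlgebraic R S :=
    (Subalgebra.isAlgebraic_iff S).mp (Algebra.isAlgebraic_adjoin_singleton_iff.mpr ht)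
  have hT : IsIntegral S (T 1 : R[T;T⁻¹]) := by
    let s : S := 2 - ⟨t, Algebra.self_mem_adjoin_singleton R t⟩
    have hs : (s : R[T;T⁻¹]) = T 1 + T (-1) := by
      change 2 - t = _
      ring
    refine ⟨.X ^ 2 - .C s * .X + 1, by monicity!, ?_⟩
    have hT_mul_T_neg : (T 1 : R[T;T⁻¹]) * T (-1) = 1 := by rw [← T_add]; simp
    rw [← Polynomial.aeval_def]
    simp only [map_add, map_sub, map_mul, map_pow, map_one, Polynomial.aeval_X,
      Polynomial.aeval_C]
    change T 1 ^ 2 - (s : R[T;T⁻¹]) * T 1 + 1 = 0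
    rw [hs]
    linear_combination (-1 : R[T;T⁻¹]) * hT_mul_T_neg
  have hX : IsAlgebraic R (Polynomial.toLaurentAlg (Polynomial.X : Polynomial R)) := by
    simpa using hT.trans_isAlgebraic (R := R)
  exact Polynomial.transcendental_X R
    ((isAlgebraic_algHom_iff _ Polynomial.toLaurent_injective).mp hX)

end LaurentPolynomial

theorem Polynomial.aeval_mul_eq_aeval_mul_of_sub_mul_eq_zero {R A : Type*} [CommRing R]
    [CommRing A] [Algebra R A] {a b c : A} (h : (a - b) * c = 0) (p : Polynomial R) :
    aeval a p * c = aeval b p * c := by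
  obtain ⟨d, hd⟩ := sub_dvd_eval_sub a b (p.map (algebraMap R A))
  rw [← sub_eq_zero, ← sub_mul, aeval_def, aeval_def, ← eval_map, ← eval_map, hd,
    mul_right_comm, h, zero_mul]

theorem w_mul_w : w * w = 2 * w := by
  have h : X 0 ^ 2 - 2 * X 0 ∈ SWFIdeal := Ideal.subset_span (by simp)
  simpa [w, sq, map_ofNat] using Ideal.Quotient.eq.mpr h

theorem w_mul_z : w * z = 2 * w := by
  have h : X 0 * X 1 - 2 * X 0 ∈ SWFIdeal := Ideal.subset_span (by simp)
  simpa [w, z, map_ofNat] using Ideal.Quotient.eq.mpr h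

theorem aeval_z_mul_w (q : Polynomial ℤ) :
    Polynomial.aeval z q * w = ((q.eval 2 : ℤ) : SWFRing) * w := by
  have hzw : (z - 2) * w = 0 := by rw [sub_mul, mul_comm, w_mul_z, sub_self]
  rw [Polynomial.aeval_mul_eq_aeval_mul_of_sub_mul_eq_zero hzw]
  simpa using congr($(Polynomial.aeval_algebraMap_apply_eq_algebraMap_eval (A := SWFRing) 2 q) * w)

theorem exists_eq_aeval_z_add_mul_w (y : SWFRing) :
    ∃ (q : Polynomial ℤ) (c : ℤ), y = Polynomial.aeval z q + c * w := by
  obtain ⟨p, rfl⟩ := Ideal.Quotient.mk_surjective y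
  induction p using MvPolynomial.induction_on with
  | C a => exact ⟨.C a, 0, by simp⟩
  | add p r hp hr =>
    obtain ⟨q₁, c₁, h₁⟩ := hp
    obtain ⟨q₂, c₂, h₂⟩ := hr
    exact ⟨q₁ + q₂, c₁ + c₂, by rw [map_add, h₁, h₂, map_add]; push_cast; ring⟩
  | mul_X p i hp =>
    obtain ⟨q, c, h⟩ := hp
    rw [map_mul, h]
    fin_cases i
    · refine ⟨0, q.eval 2 + 2 * c, ?_⟩
      change (Polynomial.aeval z q + c * w) * w = _
      rw [add_mul, aeval_z_mul_w, mul_assoc, w_mul_w, map_zero]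
      push_cast
      ring
    · refine ⟨q * .X, 2 * c, ?_⟩
      change (Polynomial.aeval z q + c * w) * z = _
      rw [add_mul, mul_assoc, w_mul_z, map_mul, Polynomial.aeval_X]
      push_cast
      ring

/-- Under the ring homomorphism `R → ℤ[θ,θ⁻¹]` with `w ↦ 0`,
`z ↦ 2 - (θ + θ⁻¹)`, an element `y` maps to `0` iff `y = c·w` for some `c ∈ ℤ`. -/
theorem stmt_6 (φ : SWFRing →+* LaurentPolynomial ℤ) (hw : φ w = 0)
    (hz : φ z = 2 - (LaurentPolynomial.T 1 + LaurentPolynomial.T (-1)))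
    (y : SWFRing) :
    φ y = 0 ↔ ∃ c : ℤ, y = (c : SWFRing) * w := by
  constructor
  · intro hy
    obtain ⟨q, c, rfl⟩ := exists_eq_aeval_z_add_mul_w y
    have hq : Polynomial.aeval (φ z) q = 0 := by
      change Polynomial.aeval (φ.toIntAlgHom z) q = 0
      rw [Polynomial.aeval_algHom_apply]
      simpa [hw] using hy
    rw [hz] at hq
    obtain rfl := transcendental_iff.mp
      LaurentPolynomial.transcendental_two_sub_T_add_T_neg_one q hq
    exact ⟨c, by simp⟩
  · rintro ⟨c, rfl⟩
    rw [map_mul, hw, mul_zero]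
end
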